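/- For every d-dimensional state ρ_A, the relative entropy of coherence equals the coherent information of the associated maximally correlated state: C_r(ρ_A) = S(ρ̃_{A'}) − S(ρ̃_{AA'}), where ρ̃_{AA'} = ∑_{i,j} ρ_{ij} |i⟩⟨j|_A ⊗ |i⟩⟨j|_{A'} and ρ̃_{A'} = Tr_A ρ̃_{AA'}. -/

import Mathlib

open scoped BigOperators Kronecker ENNReal Matrix ComplexOrder Classical
open Filter

noncomputable section

namespace QIT

/-! ## States, trace norm, partial traces -/

/-- A quantum state: a positive semidefinite, unit-trace operator. -/
def IsState {n : Type} [Fintype n] (ρ : Matrix n n ℂ) : Prop :=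
  ρ.PosSemidef ∧ ρ.trace = 1

/-- The trace norm `‖M‖₁ = Tr √(MᴴM)`. -/
def traceNorm {n : Type} [Fintype n] [DecidableEq n] (M : Matrix n n ℂ) : ℝ :=
  (((Matrix.posSemidef_conjTranspose_mul_self M).1.eigenvectorUnitary : Matrix n n ℂ) *
    Matrix.diagonal ((fun x : ℝ => ((Real.sqrt x : ℝ) : ℂ)) ∘
      (Matrix.posSemidef_conjTranspose_mul_self M).1.eigenvalues) *
    (star ((Matrix.posSemidef_conjTranspose_mul_self M).1.eigenvectorUnitary : Matrix n n ℂ))).trace.re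

/-- Partial trace over the second tensor factor. -/
def ptraceRight {a b : Type} [Fintype b] (ρ : Matrix (a × b) (a × b) ℂ) :
    Matrix a a ℂ := fun i j => ∑ k, ρ (i, k) (j, k)

/-- Partial trace over the first tensor factor. -/
def ptraceLeft {a b : Type} [Fintype a] (ρ : Matrix (a × b) (a × b) ℂ) :
    Matrix b b ℂ := fun i j => ∑ k, ρ (k, i) (k, j)

/-- Partial transpose on the second factor. -/
def ptB {a b : Type} (ρ : Matrix (a × b) (a × b) ℂ) : Matrix (a × b) (a × b) ℂ :=
  fun p q => ρ (p.1, q.2) (q.1, p.2)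

/-- A state is PPT when its partial transpose is positive semidefinite. -/
def IsPPT {a b : Type} [Fintype a] [Fintype b] (ρ : Matrix (a × b) (a × b) ℂ) : Prop :=
  (ptB ρ).PosSemidef

/-- Membership in the separable cone: a finite sum of Kronecker products of PSD operators. -/
def InSepCone {a b : Type} [Fintype a] [Fintype b] (M : Matrix (a × b) (a × b) ℂ) : Prop :=
  ∃ (k : ℕ) (x : Fin k → Matrix a a ℂ) (y : Fin k → Matrix b b ℂ),
    (∀ i, (x i).PosSemidef) ∧ (∀ i, (y i).PosSemidef) ∧ M = ∑ i, x i ⊗ₖ y i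

/-- Membership in the PPT cone. -/
def InPPTCone {a b : Type} [Fintype a] [Fintype b] (M : Matrix (a × b) (a × b) ℂ) : Prop :=
  M.PosSemidef ∧ (ptB M).PosSemidef

/-- `n`-fold tensor power of a bipartite operator, with all `A` factors grouped together
and all `B` factors grouped together (the `Aⁿ : Bⁿ` cut). -/
def bpow {a b : Type} [Fintype a] [Fintype b] (ρ : Matrix (a × b) (a × b) ℂ) (n : ℕ) :
    Matrix ((Fin n → a) × (Fin n → b)) ((Fin n → a) × (Fin n → b)) ℂ :=
  fun p q => ∏ i, ρ (p.1 i, p.2 i) (q.1 i, q.2 i)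

/-- The maximally entangled state `Φ_d` of local dimension `d`. -/
def phi (d : ℕ) : Matrix (Fin d × Fin d) (Fin d × Fin d) ℂ :=
  fun p q => if p.1 = p.2 ∧ q.1 = q.2 then ((d : ℂ))⁻¹ else 0

/-! ## Channels -/

/-- A quantum channel (CPTP map), via the Choi–Kraus representation. -/
def IsCPTP {m n : Type} [Fintype m] [DecidableEq m] [Fintype n]
    (Λ : Matrix m m ℂ → Matrix n n ℂ) : Prop :=
  ∃ (k : ℕ) (K : Fin k → Matrix n m ℂ),
    (∑ i, (K i)ᴴ * K i = 1) ∧ ∀ ρ, Λ ρ = ∑ i, K i * ρ * (K i)ᴴ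

/-- LOCC channels between bipartite systems: finite compositions of one-way rounds, in which
one party applies a (fine-grained) quantum instrument, communicates the classical outcome,
and the other party applies a channel depending on the outcome. -/
inductive IsLOCC :
    ∀ (a b a' b' : Type) [Fintype a] [DecidableEq a] [Fintype b] [DecidableEq b]
      [Fintype a'] [DecidableEq a'] [Fintype b'] [DecidableEq b'],
      (Matrix (a × b) (a × b) ℂ → Matrix (a' × b') (a' × b') ℂ) → Prop
  | oneWayA {a b a' b' : Type} [Fintype a] [DecidableEq a] [Fintype b] [DecidableEq b]
      [Fintype a'] [DecidableEq a'] [Fintype b'] [DecidableEq b']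
      (k l : ℕ) (KA : Fin k → Matrix a' a ℂ) (KB : Fin k → Fin l → Matrix b' b ℂ)
      (hA : ∑ i, (KA i)ᴴ * KA i = 1) (hB : ∀ i, ∑ j, (KB i j)ᴴ * KB i j = 1) :
      IsLOCC a b a' b' (fun ρ => ∑ i, ∑ j, (KA i ⊗ₖ KB i j) * ρ * (KA i ⊗ₖ KB i j)ᴴ)
  | oneWayB {a b a' b' : Type} [Fintype a] [DecidableEq a] [Fintype b] [DecidableEq b]
      [Fintype a'] [DecidableEq a'] [Fintype b'] [DecidableEq b']
      (k l : ℕ) (KB : Fin k → Matrix b' b ℂ) (KA : Fin k → Fin l → Matrix a' a ℂ)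
      (hB : ∑ i, (KB i)ᴴ * KB i = 1) (hA : ∀ i, ∑ j, (KA i j)ᴴ * KA i j = 1) :
      IsLOCC a b a' b' (fun ρ => ∑ i, ∑ j, (KA i j ⊗ₖ KB i) * ρ * (KA i j ⊗ₖ KB i)ᴴ)
  | comp {a b a₁ b₁ a' b' : Type} [Fintype a] [DecidableEq a] [Fintype b] [DecidableEq b]
      [Fintype a₁] [DecidableEq a₁] [Fintype b₁] [DecidableEq b₁]
      [Fintype a'] [DecidableEq a'] [Fintype b'] [DecidableEq b']
      {Λ₁ : Matrix (a × b) (a × b) ℂ → Matrix (a₁ × b₁) (a₁ × b₁) ℂ}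
      {Λ₂ : Matrix (a₁ × b₁) (a₁ × b₁) ℂ → Matrix (a' × b') (a' × b') ℂ} :
      IsLOCC a b a₁ b₁ Λ₁ → IsLOCC a₁ b₁ a' b' Λ₂ → IsLOCC a b a' b' (fun ρ => Λ₂ (Λ₁ ρ))

/-! ## Catalysts: regrouping of tensor factors -/

/-- The regrouping `(A×B)×(C×D) ≃ (A×C)×(B×D)`. -/
def sysCat (a b c d : Type) : ((a × b) × c × d) ≃ ((a × c) × b × d) :=
  Equiv.prodProdProdComm a b c d

/-- `ρ_AB ⊗ τ_CD`, regrouped so that the bipartition is `AC : BD`. -/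
def catIn {a b c d : Type} (ρ : Matrix (a × b) (a × b) ℂ) (τ : Matrix (c × d) (c × d) ℂ) :
    Matrix ((a × c) × b × d) ((a × c) × b × d) ℂ :=
  Matrix.reindex (sysCat a b c d) (sysCat a b c d) (ρ ⊗ₖ τ)

/-- Reduced state of a system+catalyst state on `(A'C)(B'D)` on the main system `A'B'`. -/
def sysOut {a c b d : Type} [Fintype c] [Fintype d]
    (X : Matrix ((a × c) × b × d) ((a × c) × b × d) ℂ) : Matrix (a × b) (a × b) ℂ :=
  ptraceRight (Matrix.reindex (sysCat a c b d) (sysCat a c b d) X)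

/-- Reduced state of a system+catalyst state on `(A'C)(B'D)` on the catalyst `CD`. -/
def catOut {a c b d : Type} [Fintype a] [Fintype b]
    (X : Matrix ((a × c) × b × d) ((a × c) × b × d) ℂ) : Matrix (c × d) (c × d) ℂ :=
  ptraceLeft (Matrix.reindex (sysCat a c b d) (sysCat a c b d) X)

/-- Tensor product `⨂ⱼ τ_{CⱼDⱼ}` of a finite family of bipartite states,
grouped as `(C₁⋯C_k) : (D₁⋯D_k)`. -/
def piKron {k : ℕ} (c d : Fin k → ℕ)
    (τ : ∀ j, Matrix (Fin (c j) × Fin (d j)) (Fin (c j) × Fin (d j)) ℂ) :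
    Matrix ((∀ j, Fin (c j)) × ∀ j, Fin (d j)) ((∀ j, Fin (c j)) × ∀ j, Fin (d j)) ℂ :=
  fun p q => ∏ j, τ j (p.1 j, p.2 j) (q.1 j, q.2 j)

/-- The marginal of a multipartite catalyst state on the pair `CⱼDⱼ`. -/
def catMarginal {k : ℕ} {c d : Fin k → ℕ} (j : Fin k)
    (X : Matrix ((∀ i, Fin (c i)) × ∀ i, Fin (d i)) ((∀ i, Fin (c i)) × ∀ i, Fin (d i)) ℂ) :
    Matrix (Fin (c j) × Fin (d j)) (Fin (c j) × Fin (d j)) ℂ :=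
  ptraceRight (Matrix.reindex
    ((Equiv.prodCongr (Equiv.piSplitAt j fun i => Fin (c i)) (Equiv.piSplitAt j fun i => Fin (d i))).trans
      (Equiv.prodProdProdComm _ _ _ _))
    ((Equiv.prodCongr (Equiv.piSplitAt j fun i => Fin (c i)) (Equiv.piSplitAt j fun i => Fin (d i))).trans
      (Equiv.prodProdProdComm _ _ _ _)) X)

/-! ## Classes of operations and catalytic transformations -/

/-- A class of free operations of bipartite entanglement theory: for each choice of
input/output systems, a predicate on maps between the corresponding matrix spaces. -/
abbrev OpClass : Type 1 :=
  ∀ (a b a' b' : Type) [Fintype a] [DecidableEq a] [Fintype b] [DecidableEq b]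
    [Fintype a'] [DecidableEq a'] [Fintype b'] [DecidableEq b'],
    (Matrix (a × b) (a × b) ℂ → Matrix (a' × b') (a' × b') ℂ) → Prop

/-- LOCC operations, as an `OpClass`. -/
def LOCCClass : OpClass := IsLOCC

/-- PPT-preserving operations: channels mapping PPT states to PPT states. -/
def PPTPClass (a b a' b' : Type) [Fintype a] [DecidableEq a] [Fintype b] [DecidableEq b]
    [Fintype a'] [DecidableEq a'] [Fintype b'] [DecidableEq b']
    (Λ : Matrix (a × b) (a × b) ℂ → Matrix (a' × b') (a' × b') ℂ) : Prop :=
  IsCPTP Λ ∧ ∀ σ, IsState σ → IsPPT σ → IsPPT (Λ σ)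

/-- Non-entangling (separability-preserving) operations. -/
def NEClass (a b a' b' : Type) [Fintype a] [DecidableEq a] [Fintype b] [DecidableEq b]
    [Fintype a'] [DecidableEq a'] [Fintype b'] [DecidableEq b']
    (Λ : Matrix (a × b) (a × b) ℂ → Matrix (a' × b') (a' × b') ℂ) : Prop :=
  IsCPTP Λ ∧ ∀ σ, IsState σ → InSepCone σ → InSepCone (Λ σ)

/-- The various kinds of catalytic assistance. -/
inductive CatKind
  | plain  -- no catalyst
  | c      -- catalyst
  | cc     -- correlated catalyst
  | mc     -- marginal catalysts
  | mcc    -- marginal correlated catalysts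

/-- `Transform F T ρ ω`: the state `ρ` can be transformed into `ω` by operations in the
class `F` assisted by catalysts of kind `T`. -/
def Transform (F : OpClass) (T : CatKind) {a b a' b' : Type}
    [Fintype a] [DecidableEq a] [Fintype b] [DecidableEq b]
    [Fintype a'] [DecidableEq a'] [Fintype b'] [DecidableEq b']
    (ρ : Matrix (a × b) (a × b) ℂ) (ω : Matrix (a' × b') (a' × b') ℂ) : Prop :=
  match T with
  | .plain => ∃ Λ, F a b a' b' Λ ∧ Λ ρ = ω
  | .c => ∃ (dc dd : ℕ) (τ : Matrix (Fin dc × Fin dd) (Fin dc × Fin dd) ℂ)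
        (Λ : Matrix ((a × Fin dc) × b × Fin dd) ((a × Fin dc) × b × Fin dd) ℂ →
             Matrix ((a' × Fin dc) × b' × Fin dd) ((a' × Fin dc) × b' × Fin dd) ℂ),
      IsState τ ∧ F (a × Fin dc) (b × Fin dd) (a' × Fin dc) (b' × Fin dd) Λ ∧
      Λ (catIn ρ τ) = catIn ω τ
  | .cc => ∃ (dc dd : ℕ) (τ : Matrix (Fin dc × Fin dd) (Fin dc × Fin dd) ℂ)
        (Λ : Matrix ((a × Fin dc) × b × Fin dd) ((a × Fin dc) × b × Fin dd) ℂ →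
             Matrix ((a' × Fin dc) × b' × Fin dd) ((a' × Fin dc) × b' × Fin dd) ℂ),
      IsState τ ∧ F (a × Fin dc) (b × Fin dd) (a' × Fin dc) (b' × Fin dd) Λ ∧
      sysOut (Λ (catIn ρ τ)) = ω ∧ catOut (Λ (catIn ρ τ)) = τ
  | .mc => ∃ (k : ℕ) (c d : Fin k → ℕ)
        (τs : ∀ j, Matrix (Fin (c j) × Fin (d j)) (Fin (c j) × Fin (d j)) ℂ)
        (Λ : Matrix ((a × ∀ j, Fin (c j)) × b × ∀ j, Fin (d j))
               ((a × ∀ j, Fin (c j)) × b × ∀ j, Fin (d j)) ℂ →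
             Matrix ((a' × ∀ j, Fin (c j)) × b' × ∀ j, Fin (d j))
               ((a' × ∀ j, Fin (c j)) × b' × ∀ j, Fin (d j)) ℂ)
        (τ' : Matrix ((∀ j, Fin (c j)) × ∀ j, Fin (d j)) ((∀ j, Fin (c j)) × ∀ j, Fin (d j)) ℂ),
      (∀ j, IsState (τs j)) ∧
      F (a × ∀ j, Fin (c j)) (b × ∀ j, Fin (d j)) (a' × ∀ j, Fin (c j)) (b' × ∀ j, Fin (d j)) Λ ∧
      Λ (catIn ρ (piKron c d τs)) = catIn ω τ' ∧ ∀ j, catMarginal j τ' = τs j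
  | .mcc => ∃ (k : ℕ) (c d : Fin k → ℕ)
        (τs : ∀ j, Matrix (Fin (c j) × Fin (d j)) (Fin (c j) × Fin (d j)) ℂ)
        (Λ : Matrix ((a × ∀ j, Fin (c j)) × b × ∀ j, Fin (d j))
               ((a × ∀ j, Fin (c j)) × b × ∀ j, Fin (d j)) ℂ →
             Matrix ((a' × ∀ j, Fin (c j)) × b' × ∀ j, Fin (d j))
               ((a' × ∀ j, Fin (c j)) × b' × ∀ j, Fin (d j)) ℂ),
      (∀ j, IsState (τs j)) ∧
      F (a × ∀ j, Fin (c j)) (b × ∀ j, Fin (d j)) (a' × ∀ j, Fin (c j)) (b' × ∀ j, Fin (d j)) Λ ∧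
      sysOut (Λ (catIn ρ (piKron c d τs))) = ω ∧
      ∀ j, catMarginal j (catOut (Λ (catIn ρ (piKron c d τs)))) = τs j

/-! ## Asymptotic rates: distillable entanglement and entanglement cost -/

/-- Achievable rates for distillation of maximally entangled two-qubit states from `ρ`. -/
def distRates (F : OpClass) (T : CatKind) {a b : Type}
    [Fintype a] [DecidableEq a] [Fintype b] [DecidableEq b]
    (ρ : Matrix (a × b) (a × b) ℂ) : Set ℝ :=
  {R | 0 ≤ R ∧ ∃ ε : ℕ → ℝ, Tendsto ε atTop (nhds 0) ∧
    ∀ n : ℕ, ∃ ω' : Matrix ((Fin ⌈R * n⌉₊ → Fin 2) × (Fin ⌈R * n⌉₊ → Fin 2))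
        ((Fin ⌈R * n⌉₊ → Fin 2) × (Fin ⌈R * n⌉₊ → Fin 2)) ℂ,
      IsState ω' ∧ Transform F T (bpow ρ n) ω' ∧
      traceNorm (ω' - bpow (phi 2) ⌈R * n⌉₊) / 2 ≤ ε n}

/-- Distillable entanglement `E_{d,F̃}(ρ) = R_F̃(ρ → Φ₂)`. -/
def Ed (F : OpClass) (T : CatKind) {a b : Type}
    [Fintype a] [DecidableEq a] [Fintype b] [DecidableEq b]
    (ρ : Matrix (a × b) (a × b) ℂ) : ℝ≥0∞ :=
  ⨆ R ∈ distRates F T ρ, ENNReal.ofReal R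

/-- Achievable rates for dilution, i.e. for the transformation `Φ₂ → ρ`. -/
def dilRates (F : OpClass) (T : CatKind) {a b : Type}
    [Fintype a] [DecidableEq a] [Fintype b] [DecidableEq b]
    (ρ : Matrix (a × b) (a × b) ℂ) : Set ℝ :=
  {R | 0 ≤ R ∧ ∃ ε : ℕ → ℝ, Tendsto ε atTop (nhds 0) ∧
    ∀ n : ℕ, ∃ ω' : Matrix ((Fin ⌈R * n⌉₊ → a) × (Fin ⌈R * n⌉₊ → b))
        ((Fin ⌈R * n⌉₊ → a) × (Fin ⌈R * n⌉₊ → b)) ℂ,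
      IsState ω' ∧ Transform F T (bpow (phi 2) n) ω' ∧
      traceNorm (ω' - bpow ρ ⌈R * n⌉₊) / 2 ≤ ε n}

/-- Entanglement cost `E_{c,F̃}(ρ) = 1 / R_F̃(Φ₂ → ρ)`. -/
def Ec (F : OpClass) (T : CatKind) {a b : Type}
    [Fintype a] [DecidableEq a] [Fintype b] [DecidableEq b]
    (ρ : Matrix (a × b) (a × b) ℂ) : ℝ≥0∞ :=
  (⨆ R ∈ dilRates F T ρ, ENNReal.ofReal R)⁻¹

/-! ## Entropic quantities -/

/-- Matrix logarithm (base 2) of a Hermitian matrix, via the spectral decomposition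
(with the convention `log 0 = 0` on the kernel); junk value `0` on non-Hermitian inputs. -/
def matLog {n : Type} [Fintype n] [DecidableEq n] (M : Matrix n n ℂ) : Matrix n n ℂ :=
  if hM : M.IsHermitian then
    (hM.eigenvectorUnitary : Matrix n n ℂ) *
      Matrix.diagonal (fun i => (Real.logb 2 (hM.eigenvalues i) : ℂ)) *
      (hM.eigenvectorUnitary : Matrix n n ℂ)ᴴ
  else 0

/-- The Umegaki relative entropy `D(ρ‖σ) = Tr ρ (log₂ ρ − log₂ σ)`, equal to `∞` when
the support of `ρ` is not contained in the support of `σ`. -/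
def relEnt {n : Type} [Fintype n] [DecidableEq n] (ρ σ : Matrix n n ℂ) : ℝ≥0∞ :=
  if ∀ v : n → ℂ, σ.mulVec v = 0 → ρ.mulVec v = 0 then
    ENNReal.ofReal ((ρ * (matLog ρ - matLog σ)).trace.re)
  else ⊤

/-- Kullback–Leibler divergence of finitely supported distributions (base 2). -/
def klDiv {ι : Type} [Fintype ι] (p q : ι → ℝ) : ℝ≥0∞ :=
  if ∀ i, q i = 0 → p i = 0 then
    ENNReal.ofReal (∑ i, p i * Real.logb 2 (p i / q i))
  else ⊤

/-- Von Neumann entropy `S(ρ) = −Tr ρ log₂ ρ`. -/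
def vnEnt {n : Type} [Fintype n] [DecidableEq n] (ρ : Matrix n n ℂ) : ℝ :=
  -(ρ * matLog ρ).trace.re

/-! ## Relative entropies of entanglement -/

/-- The two cones of free states. -/
inductive ConeKind | sep | ppt

/-- Membership in the cone specified by `κ`. -/
def inCone (κ : ConeKind) {a b : Type} [Fintype a] [Fintype b]
    (M : Matrix (a × b) (a × b) ℂ) : Prop :=
  match κ with
  | .sep => InSepCone M
  | .ppt => InPPTCone M

/-- The relative entropy of entanglement w.r.t. the cone `κ`:
`D_𝒦(ρ) = inf_{σ ∈ 𝒦¹} D(ρ‖σ)`. -/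
def DRel (κ : ConeKind) {a b : Type} [Fintype a] [DecidableEq a] [Fintype b] [DecidableEq b]
    (ρ : Matrix (a × b) (a × b) ℂ) : ℝ≥0∞ :=
  ⨅ (σ : Matrix (a × b) (a × b) ℂ) (_ : IsState σ) (_ : inCone κ σ), relEnt ρ σ

/-- Regularized relative entropy of entanglement; by tensor subadditivity of `D_𝒦` and
Fekete's lemma, the limit `lim_n (1/n) D_𝒦(ρ^{⊗n})` exists and equals the infimum. -/
def DRelReg (κ : ConeKind) {a b : Type} [Fintype a] [DecidableEq a] [Fintype b] [DecidableEq b]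
    (ρ : Matrix (a × b) (a × b) ℂ) : ℝ≥0∞ :=
  ⨅ (n : ℕ) (_ : 0 < n), ((n : ℝ≥0∞))⁻¹ * DRel κ (bpow ρ n)

/-- A POVM: finitely many PSD effects summing to the identity. -/
def IsPOVM {n : Type} [Fintype n] [DecidableEq n] {k : ℕ} (E : Fin k → Matrix n n ℂ) : Prop :=
  (∀ i, (E i).PosSemidef) ∧ ∑ i, E i = 1

/-- A POVM is LOCC-implementable if the associated measure-and-record-on-both-sides channel
is an LOCC channel. -/
def IsLOCCMeasurement {a b : Type} [Fintype a] [DecidableEq a] [Fintype b] [DecidableEq b]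
    {k : ℕ} (E : Fin k → Matrix (a × b) (a × b) ℂ) : Prop :=
  ∃ Λ : Matrix (a × b) (a × b) ℂ → Matrix (Fin k × Fin k) (Fin k × Fin k) ℂ,
    IsLOCC a b (Fin k) (Fin k) Λ ∧
    ∀ ρ, Λ ρ = Matrix.diagonal fun p => if p.1 = p.2 then ((E p.1) * ρ).trace else 0

/-- The three classes of bipartite measurements. -/
inductive MeasKind | locc | sep | ppt

/-- The defining condition for membership of a POVM in the class `μ`. -/
def measExtra (μ : MeasKind) {a b : Type} [Fintype a] [DecidableEq a] [Fintype b] [DecidableEq b]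
    {k : ℕ} (E : Fin k → Matrix (a × b) (a × b) ℂ) : Prop :=
  match μ with
  | .locc => IsLOCCMeasurement E
  | .sep => ∀ i, InSepCone (E i)
  | .ppt => ∀ i, InPPTCone (E i)

/-- The measured relative entropy of entanglement w.r.t. the cone `κ` and an arbitrary
collection `Meas` of measurements:
`D_𝒦^𝕂(ρ) = inf_{σ ∈ 𝒦¹} sup_{(E_i) ∈ 𝕂} D((Tr E_i ρ)_i ‖ (Tr E_i σ)_i)`. -/
def DMeasGen (κ : ConeKind) {a b : Type} [Fintype a] [DecidableEq a] [Fintype b] [DecidableEq b]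
    (Meas : ∀ k : ℕ, (Fin k → Matrix (a × b) (a × b) ℂ) → Prop)
    (ρ : Matrix (a × b) (a × b) ℂ) : ℝ≥0∞ :=
  ⨅ (σ : Matrix (a × b) (a × b) ℂ) (_ : IsState σ) (_ : inCone κ σ),
    ⨆ (k : ℕ) (E : Fin k → Matrix (a × b) (a × b) ℂ) (_ : IsPOVM E) (_ : Meas k E),
      klDiv (fun i => ((E i) * ρ).trace.re) (fun i => ((E i) * σ).trace.re)

/-- The `𝕂`-measured relative entropy of entanglement for `𝕂 ∈ {𝕃𝕆ℂℂ, 𝕊𝔼ℙ, ℙℙ𝕋}`. -/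
def DMeas (κ : ConeKind) (μ : MeasKind) {a b : Type}
    [Fintype a] [DecidableEq a] [Fintype b] [DecidableEq b]
    (ρ : Matrix (a × b) (a × b) ℂ) : ℝ≥0∞ :=
  DMeasGen κ (fun _k E => measExtra μ E) ρ

/-- Regularized measured relative entropy of entanglement; by (strong) superadditivity and
Fekete's lemma, the limit `lim_n (1/n) D_𝒦^𝕂(ρ^{⊗n})` exists and equals the supremum. -/
def DMeasReg (κ : ConeKind) (μ : MeasKind) {a b : Type}
    [Fintype a] [DecidableEq a] [Fintype b] [DecidableEq b]
    (ρ : Matrix (a × b) (a × b) ℂ) : ℝ≥0∞ :=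
  ⨆ (n : ℕ) (_ : 0 < n), ((n : ℝ≥0∞))⁻¹ * DMeas κ μ (bpow ρ n)

/-! ## Reductions of four-partite states -/

/-- Reduction of a state on `(A A') : (B B')` to `A : B`. -/
def redAB {a a' b b' : Type} [Fintype a'] [Fintype b']
    (ρ : Matrix ((a × a') × b × b') ((a × a') × b × b') ℂ) : Matrix (a × b) (a × b) ℂ :=
  fun p q => ∑ u, ∑ v, ρ ((p.1, u), (p.2, v)) ((q.1, u), (q.2, v))

/-- Reduction of a state on `(A A') : (B B')` to `A' : B'`. -/
def redA'B' {a a' b b' : Type} [Fintype a] [Fintype b]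
    (ρ : Matrix ((a × a') × b × b') ((a × a') × b × b') ℂ) : Matrix (a' × b') (a' × b') ℂ :=
  fun p q => ∑ i, ∑ j, ρ ((i, p.1), (j, p.2)) ((i, q.1), (j, q.2))

end QIT

namespace QIT

/-! ## Resource theory of coherence -/

/-- The completely dephasing channel `Δ` in the fixed (computational) basis. -/
def dephase {n : Type} [Fintype n] [DecidableEq n] (ρ : Matrix n n ℂ) : Matrix n n ℂ :=
  Matrix.diagonal fun i => ρ i i

/-- The relative entropy of coherence `C_r(ρ) = S(Δ(ρ)) − S(ρ)`. -/
def Cr {n : Type} [Fintype n] [DecidableEq n] (ρ : Matrix n n ℂ) : ℝ :=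
  vnEnt (dephase ρ) - vnEnt ρ

/-- The rank-one projector `|ψ⟩⟨ψ|`. -/
def pureProj {n : Type} (ψ : n → ℂ) : Matrix n n ℂ := Matrix.vecMulVec ψ (star ψ)

/-- The coherence of formation
`C_f(ρ) = inf_{ρ = ∑ₓ pₓ |ψₓ⟩⟨ψₓ|} ∑ₓ pₓ S(Δ(|ψₓ⟩⟨ψₓ|))`. -/
def Cf {n : Type} [Fintype n] [DecidableEq n] (ρ : Matrix n n ℂ) : ℝ :=
  sInf {x | ∃ (k : ℕ) (p : Fin k → ℝ) (ψ : Fin k → n → ℂ),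
    (∀ i, 0 ≤ p i) ∧ (∑ i, p i = 1) ∧ (∀ i, ∑ j, Complex.normSq (ψ i j) = 1) ∧
    ρ = ∑ i, (p i : ℂ) • pureProj (ψ i) ∧
    x = ∑ i, p i * vnEnt (dephase (pureProj (ψ i)))}

/-- A class of free operations of the resource theory of coherence. -/
abbrev OpClass1 : Type 1 :=
  ∀ (a b : Type) [Fintype a] [DecidableEq a] [Fintype b] [DecidableEq b],
    (Matrix a a ℂ → Matrix b b ℂ) → Prop

/-- A Kraus operator is incoherent when it maps each basis vector to a multiple of a basis
vector, i.e. each column has at most one non-zero entry. -/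
def IsIncoherentKraus {a b : Type} (K : Matrix b a ℂ) : Prop :=
  ∀ i : a, ∃ j : b, ∀ j' : b, K j' i ≠ 0 → j' = j

/-- Incoherent operations (IO): channels admitting a Kraus representation by incoherent
Kraus operators. -/
def IOClass (a b : Type) [Fintype a] [DecidableEq a] [Fintype b] [DecidableEq b]
    (Λ : Matrix a a ℂ → Matrix b b ℂ) : Prop :=
  ∃ (k : ℕ) (K : Fin k → Matrix b a ℂ),
    (∑ i, (K i)ᴴ * K i = 1) ∧ (∀ ρ, Λ ρ = ∑ i, K i * ρ * (K i)ᴴ) ∧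
    ∀ i, IsIncoherentKraus (K i)

/-- Strictly incoherent operations (SIO): channels admitting a Kraus representation in which
both each Kraus operator and its adjoint are incoherent. -/
def SIOClass (a b : Type) [Fintype a] [DecidableEq a] [Fintype b] [DecidableEq b]
    (Λ : Matrix a a ℂ → Matrix b b ℂ) : Prop :=
  ∃ (k : ℕ) (K : Fin k → Matrix b a ℂ),
    (∑ i, (K i)ᴴ * K i = 1) ∧ (∀ ρ, Λ ρ = ∑ i, K i * ρ * (K i)ᴴ) ∧
    ∀ i, IsIncoherentKraus (K i) ∧ IsIncoherentKraus ((K i)ᴴ)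

/-- `n`-fold tensor power of a single-system operator. -/
def spow {a : Type} (ρ : Matrix a a ℂ) (n : ℕ) : Matrix (Fin n → a) (Fin n → a) ℂ :=
  fun p q => ∏ i, ρ (p i) (q i)

/-- The coherence bit `|+⟩⟨+|`, `|+⟩ = (|0⟩+|1⟩)/√2`. -/
def plusM : Matrix (Fin 2) (Fin 2) ℂ := fun _ _ => 2⁻¹

/-- Tensor product `⨂ⱼ τ_{Cⱼ}` of a finite family of single-system states. -/
def piKron1 {k : ℕ} {c : Fin k → ℕ} (τ : ∀ j, Matrix (Fin (c j)) (Fin (c j)) ℂ) :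
    Matrix (∀ j, Fin (c j)) (∀ j, Fin (c j)) ℂ :=
  fun p q => ∏ j, τ j (p j) (q j)

/-- Marginal of a multipartite catalyst state on the `j`-th factor. -/
def marginal1 {k : ℕ} {c : Fin k → ℕ} (j : Fin k)
    (X : Matrix (∀ i, Fin (c i)) (∀ i, Fin (c i)) ℂ) : Matrix (Fin (c j)) (Fin (c j)) ℂ :=
  ptraceRight (Matrix.reindex (Equiv.piSplitAt j fun i => Fin (c i))
    (Equiv.piSplitAt j fun i => Fin (c i)) X)

/-- `TransformC F T ρ ω`: the state `ρ` can be transformed into `ω` by operations in the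
class `F` assisted by catalysts of kind `T` (single-party resource theory). -/
def TransformC (F : OpClass1) (T : CatKind) {a b : Type}
    [Fintype a] [DecidableEq a] [Fintype b] [DecidableEq b]
    (ρ : Matrix a a ℂ) (ω : Matrix b b ℂ) : Prop :=
  match T with
  | .plain => ∃ Λ, F a b Λ ∧ Λ ρ = ω
  | .c => ∃ (dc : ℕ) (τ : Matrix (Fin dc) (Fin dc) ℂ)
        (Λ : Matrix (a × Fin dc) (a × Fin dc) ℂ → Matrix (b × Fin dc) (b × Fin dc) ℂ),
      IsState τ ∧ F (a × Fin dc) (b × Fin dc) Λ ∧ Λ (ρ ⊗ₖ τ) = ω ⊗ₖ τ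
  | .cc => ∃ (dc : ℕ) (τ : Matrix (Fin dc) (Fin dc) ℂ)
        (Λ : Matrix (a × Fin dc) (a × Fin dc) ℂ → Matrix (b × Fin dc) (b × Fin dc) ℂ),
      IsState τ ∧ F (a × Fin dc) (b × Fin dc) Λ ∧
      ptraceRight (Λ (ρ ⊗ₖ τ)) = ω ∧ ptraceLeft (Λ (ρ ⊗ₖ τ)) = τ
  | .mc => ∃ (k : ℕ) (c : Fin k → ℕ) (τs : ∀ j, Matrix (Fin (c j)) (Fin (c j)) ℂ)
        (Λ : Matrix (a × ∀ j, Fin (c j)) (a × ∀ j, Fin (c j)) ℂ →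
             Matrix (b × ∀ j, Fin (c j)) (b × ∀ j, Fin (c j)) ℂ)
        (τ' : Matrix (∀ j, Fin (c j)) (∀ j, Fin (c j)) ℂ),
      (∀ j, IsState (τs j)) ∧ F (a × ∀ j, Fin (c j)) (b × ∀ j, Fin (c j)) Λ ∧
      Λ (ρ ⊗ₖ piKron1 τs) = ω ⊗ₖ τ' ∧ ∀ j, marginal1 j τ' = τs j
  | .mcc => ∃ (k : ℕ) (c : Fin k → ℕ) (τs : ∀ j, Matrix (Fin (c j)) (Fin (c j)) ℂ)
        (Λ : Matrix (a × ∀ j, Fin (c j)) (a × ∀ j, Fin (c j)) ℂ →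
             Matrix (b × ∀ j, Fin (c j)) (b × ∀ j, Fin (c j)) ℂ),
      (∀ j, IsState (τs j)) ∧ F (a × ∀ j, Fin (c j)) (b × ∀ j, Fin (c j)) Λ ∧
      ptraceRight (Λ (ρ ⊗ₖ piKron1 τs)) = ω ∧
      ∀ j, marginal1 j (ptraceLeft (Λ (ρ ⊗ₖ piKron1 τs))) = τs j

/-- Achievable rates for coherence distillation. -/
def cohDistRates (F : OpClass1) (T : CatKind) {a : Type} [Fintype a] [DecidableEq a]
    (ρ : Matrix a a ℂ) : Set ℝ :=
  {R | 0 ≤ R ∧ ∃ ε : ℕ → ℝ, Tendsto ε atTop (nhds 0) ∧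
    ∀ n : ℕ, ∃ ω' : Matrix (Fin ⌈R * n⌉₊ → Fin 2) (Fin ⌈R * n⌉₊ → Fin 2) ℂ,
      IsState ω' ∧ TransformC F T (spow ρ n) ω' ∧
      traceNorm (ω' - spow plusM ⌈R * n⌉₊) / 2 ≤ ε n}

/-- Distillable coherence `C_{d,F̃}(ρ) = R_F̃(ρ → |+⟩⟨+|)`. -/
def Cd (F : OpClass1) (T : CatKind) {a : Type} [Fintype a] [DecidableEq a]
    (ρ : Matrix a a ℂ) : ℝ≥0∞ :=
  ⨆ R ∈ cohDistRates F T ρ, ENNReal.ofReal R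

/-- Achievable rates for coherence dilution. -/
def cohDilRates (F : OpClass1) (T : CatKind) {a : Type} [Fintype a] [DecidableEq a]
    (ρ : Matrix a a ℂ) : Set ℝ :=
  {R | 0 ≤ R ∧ ∃ ε : ℕ → ℝ, Tendsto ε atTop (nhds 0) ∧
    ∀ n : ℕ, ∃ ω' : Matrix (Fin ⌈R * n⌉₊ → a) (Fin ⌈R * n⌉₊ → a) ℂ,
      IsState ω' ∧ TransformC F T (spow plusM n) ω' ∧
      traceNorm (ω' - spow ρ ⌈R * n⌉₊) / 2 ≤ ε n}

/-- Coherence cost `C_{c,F̃}(ρ) = 1 / R_F̃(|+⟩⟨+| → ρ)`. -/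
def Cc (F : OpClass1) (T : CatKind) {a : Type} [Fintype a] [DecidableEq a]
    (ρ : Matrix a a ℂ) : ℝ≥0∞ :=
  (⨆ R ∈ cohDilRates F T ρ, ENNReal.ofReal R)⁻¹

end QIT

namespace QIT

/-- The maximally correlated state `ρ̃_{AA'} = ∑_{i,j} ρ_{ij} |i⟩⟨j|_A ⊗ |i⟩⟨j|_{A'}`
associated with a state `ρ_A`. -/
def maxCorr {a : Type} (ρ : Matrix a a ℂ) : Matrix (a × a) (a × a) ℂ :=
  fun p q => if p.1 = p.2 ∧ q.1 = q.2 then ρ p.1 q.1 else 0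

/-! The maximally correlated state is `ρ̃ = V ρ Vᴴ` for the isometry `V |i⟩ = |i⟩|i⟩`. Conjugating
by an isometry only multiplies the characteristic polynomial by a power of `X`, i.e. adds zero
eigenvalues, which do not contribute to the entropy; hence `S(ρ̃_{AA'}) = S(ρ)`. On the other hand
`Tr_A ρ̃ = Δ(ρ)`, so the coherent information is `S(Δ(ρ)) − S(ρ) = C_r(ρ)`. -/

open Matrix Polynomial

lemma _root_.Polynomial.roots_X_pow_mul {R : Type*} [CommRing R] [IsDomain R] {p : R[X]}
    (hp : p.Monic) (k : ℕ) : (X ^ k * p).roots = k • {0} + p.roots := by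
  rw [roots_mul ((monic_X_pow k).mul hp).ne_zero, roots_X_pow]

section Entropy

variable {n : Type} [Fintype n] [DecidableEq n]

lemma matLog_eq_cfc {M : Matrix n n ℂ} (hM : M.IsHermitian) :
    matLog M = cfc (Real.logb 2) M := by
  rw [matLog, dif_pos hM, hM.cfc_eq, IsHermitian.cfc, Unitary.conjStarAlgAut_apply]
  rfl

lemma vnEnt_eq_sum_eigenvalues {M : Matrix n n ℂ} (hM : M.IsHermitian) :
    vnEnt M = -∑ i, hM.eigenvalues i * Real.logb 2 (hM.eigenvalues i) := by
  have hprod : M * matLog M = cfc (fun x => x * Real.logb 2 x) M := by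
    rw [matLog_eq_cfc hM, cfc_mul (fun x => x) (Real.logb 2) M
      (hg := M.finite_real_spectrum.continuousOn _), cfc_id' ℝ M]
  rw [vnEnt, hprod, hM.cfc_eq, IsHermitian.cfc, Unitary.conjStarAlgAut_apply, trace_mul_cycle,
    Unitary.coe_star_mul_self, one_mul, trace_diagonal]
  simp

lemma vnEnt_eq_sum_roots_charpoly {M : Matrix n n ℂ} (hM : M.IsHermitian) :
    vnEnt M = -(M.charpoly.roots.map fun z => z.re * Real.logb 2 z.re).sum := by
  rw [vnEnt_eq_sum_eigenvalues hM, hM.roots_charpoly_eq_eigenvalues, Multiset.map_map]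
  rfl

lemma vnEnt_conj_isometry {m : Type} [Fintype m] [DecidableEq m] {V : Matrix m n ℂ}
    (hV : Vᴴ * V = 1) {ρ : Matrix n n ℂ} (hρ : ρ.IsHermitian) :
    vnEnt (V * ρ * Vᴴ) = vnEnt ρ := by
  have hcharpoly : (X : ℂ[X]) ^ Fintype.card n * (V * ρ * Vᴴ).charpoly
      = X ^ Fintype.card m * ρ.charpoly := by
    rw [charpoly_mul_comm', ← Matrix.mul_assoc, hV, Matrix.one_mul]
  have hroots := congrArg Polynomial.roots hcharpoly
  rw [roots_X_pow_mul (charpoly_monic _), roots_X_pow_mul (charpoly_monic _)] at hroots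
  have hsum := congrArg (fun s : Multiset ℂ => (s.map fun z => z.re * Real.logb 2 z.re).sum) hroots
  simp only [Multiset.map_add, Multiset.sum_add, Multiset.map_nsmul, Multiset.sum_nsmul,
    Multiset.map_singleton, Multiset.sum_singleton, Complex.zero_re, zero_mul, smul_zero,
    zero_add] at hsum
  rw [vnEnt_eq_sum_roots_charpoly (isHermitian_mul_mul_conjTranspose V hρ),
    vnEnt_eq_sum_roots_charpoly hρ, hsum]

end Entropy

def copyIsometry (a : Type) : Matrix (a × a) a ℂ :=
  Matrix.of fun p i => if p = (i, i) then 1 else 0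

lemma copyIsometry_conjTranspose_mul_self (a : Type) [Fintype a] [DecidableEq a] :
    (copyIsometry a)ᴴ * copyIsometry a = 1 := by
  ext i j
  simp [copyIsometry, mul_apply, one_apply, eq_comm]

lemma maxCorr_eq_conj_copyIsometry {a : Type} [Fintype a] (ρ : Matrix a a ℂ) :
    maxCorr ρ = copyIsometry a * ρ * (copyIsometry a)ᴴ := by
  ext ⟨i, i'⟩ ⟨j, j'⟩
  by_cases hi : i = i' <;> by_cases hj : j = j' <;>
    simp [maxCorr, copyIsometry, mul_apply, apply_ite (starRingEnd ℂ), ite_and, eq_comm, hi, hj]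

lemma ptraceLeft_maxCorr {a : Type} [Fintype a] [DecidableEq a] (ρ : Matrix a a ℂ) :
    ptraceLeft (maxCorr ρ) = dephase ρ := by
  ext i j
  simp [ptraceLeft, maxCorr, dephase, diagonal_apply, ite_and]

/-- For every `d`-dimensional state `ρ_A`, the relative entropy of coherence
equals the coherent information of the associated maximally correlated state:
`C_r(ρ_A) = S(ρ̃_{A'}) − S(ρ̃_{AA'})`, with `ρ̃_{A'} = Tr_A ρ̃_{AA'}`. -/
theorem Cr_eq_coherentInfo_maxCorr
    {a : Type} [Fintype a] [DecidableEq a] (ρ : Matrix a a ℂ) (hρ : IsState ρ) :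
    Cr ρ = vnEnt (ptraceLeft (maxCorr ρ)) - vnEnt (maxCorr ρ) := by
  rw [Cr, ptraceLeft_maxCorr, maxCorr_eq_conj_copyIsometry,
    vnEnt_conj_isometry (copyIsometry_conjTranspose_mul_self a) hρ.1.1]

end QIT
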